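/- As an identity of formal power series over the rationals, (1 − x)²(1 − x⁴)(1 − x⁶) · Σ_{t≥0} c₃(t) xᵗ = 8x¹⁰(2x² + 1); equivalently, the generating function Σ_{t≥0} c₃(t) xᵗ equals 8x¹⁰(2x² + 1) / ((1 − x)²(1 − x⁴)(1 − x⁶)). -/

import Mathlib

/-- A 3×3 magic square with entries bounded above (strictly) by `t`: pairwise distinct
positive integer entries less than `t`, with all row sums, column sums, and both main
diagonal sums equal to one another. -/
def IsBoundedMagicSquare3 (t : ℕ) (M : Matrix (Fin 3) (Fin 3) ℕ) : Prop :=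
  (∀ i j, 0 < M i j ∧ M i j < t) ∧
  (Function.Injective fun p : Fin 3 × Fin 3 => M p.1 p.2) ∧
  ∃ s, (∀ i, ∑ j, M i j = s) ∧ (∀ j, ∑ i, M i j = s) ∧
    M 0 0 + M 1 1 + M 2 2 = s ∧ M 0 2 + M 1 1 + M 2 0 = s

/-- The number of 3×3 magic squares all of whose entries are less than `t`. -/
noncomputable def c3 (t : ℕ) : ℕ :=
  Set.ncard {M : Matrix (Fin 3) (Fin 3) ℕ | IsBoundedMagicSquare3 t M}

/-!
Every 3×3 magic square is `c + magicOffset a b` with centre `c`: its entries are `c` plus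
`0, ±a, ±b, ±(a + b), ±(a - b)`. These are distinct exactly when `a, b ≠ 0`, `|a| ≠ |b|`,
`|a| ≠ 2|b|` and `|b| ≠ 2|a|`, and lie in `(0, t)` exactly when `|a| + |b| < c < t - |a| - |b|`.
Hence `c₃(t) = ∑ₘ N(m) (t - 1 - 2m)`, where `N(m) = 4 (m - 1 - [2 ∣ m] - 2 [3 ∣ m])` counts the
admissible `(a, b)` with `|a| + |b| = m` (two signs, times the `m - 1` splittings
`m = |a| + |b|` less those in ratio `1 : 1`, `1 : 2` or `2 : 1`). The weight `t - 1 - 2m` has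
generating function `x^(2m+2) / (1 - x)²`, and `(1 - y²)(1 - y³) ∑ N(m) yᵐ = 8y⁴ + 16y⁵`;
substituting `y = x²` gives the identity.
-/

open Finset PowerSeries

def IsMagicPair (a b : ℤ) : Prop :=
  a ≠ 0 ∧ b ≠ 0 ∧ a.natAbs ≠ b.natAbs ∧ a.natAbs ≠ 2 * b.natAbs ∧ b.natAbs ≠ 2 * a.natAbs

instance : DecidableRel IsMagicPair := fun _ _ => by unfold IsMagicPair; infer_instance

def magicOffset (a b : ℤ) : Matrix (Fin 3) (Fin 3) ℤ :=
  !![a, -a - b, b;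
     b - a, 0, a - b;
     -b, a + b, -a]

/-- `toNat` only matters outside the admissible range of parameters, where some entry of
`c + magicOffset a b` is not positive. -/
def magicSquare (a b : ℤ) (c : ℕ) : Matrix (Fin 3) (Fin 3) ℕ :=
  Matrix.of fun i j => (c + magicOffset a b i j).toNat

section Parametrization

variable {a b : ℤ}

theorem isMagicPair_iff_injective_magicOffset :
    IsMagicPair a b ↔ Function.Injective fun p : Fin 3 × Fin 3 => magicOffset a b p.1 p.2 := by
  constructor
  · rintro ⟨ha, hb, hab, ha2b, hb2a⟩
    obtain ⟨_, _, _, _, _, _⟩ :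
        a ≠ b ∧ a ≠ -b ∧ a ≠ 2 * b ∧ a ≠ -2 * b ∧ b ≠ 2 * a ∧ b ≠ -2 * a := by omega
    clear hab ha2b hb2a
    rintro ⟨i, j⟩ ⟨i', j'⟩ h
    fin_cases i <;> fin_cases j <;> fin_cases i' <;> fin_cases j' <;>
      simp [magicOffset] at h ⊢ <;> omega
  · intro hinj
    have hne : ∀ p q : Fin 3 × Fin 3, p ≠ q →
        magicOffset a b p.1 p.2 ≠ magicOffset a b q.1 q.2 := fun p q hpq h => hpq (hinj h)
    have h1 := hne (0, 0) (1, 1) (by decide); have h2 := hne (0, 2) (1, 1) (by decide)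
    have h3 := hne (0, 0) (0, 2) (by decide); have h4 := hne (0, 0) (2, 0) (by decide)
    have h5 := hne (1, 2) (0, 2) (by decide); have h6 := hne (0, 1) (0, 2) (by decide)
    have h7 := hne (1, 0) (0, 0) (by decide); have h8 := hne (2, 1) (2, 2) (by decide)
    simp only [magicOffset, Matrix.of_apply, Matrix.cons_val', Matrix.cons_val,
      Matrix.cons_val_zero, Matrix.cons_val_one, Matrix.cons_val_fin_one, Fin.isValue,
      ne_eq] at h1 h2 h3 h4 h5 h6 h7 h8
    refine ⟨?_, ?_, ?_, ?_, ?_⟩ <;> omega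

theorem forall_add_magicOffset_mem_Ioo_iff {c t : ℕ} :
    (∀ i j, (c : ℤ) + magicOffset a b i j ∈ Set.Ioo 0 (t : ℤ)) ↔
      a.natAbs + b.natAbs < c ∧ c + a.natAbs + b.natAbs < t := by
  simp only [Set.mem_Ioo]
  constructor
  · intro h
    have h01 := h 0 1; have h10 := h 1 0; have h12 := h 1 2; have h21 := h 2 1
    simp only [magicOffset, Matrix.of_apply, Matrix.cons_val', Matrix.cons_val,
      Matrix.cons_val_zero, Matrix.cons_val_one, Matrix.cons_val_fin_one, Fin.isValue]
      at h01 h10 h12 h21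
    omega
  · intro h i j
    fin_cases i <;> fin_cases j <;> simp [magicOffset] <;> omega

theorem eq_magicSquare_of_sums {M : Matrix (Fin 3) (Fin 3) ℕ} {s : ℕ}
    (hrow : ∀ i, ∑ j, M i j = s) (hcol : ∀ j, ∑ i, M i j = s)
    (hdiag : M 0 0 + M 1 1 + M 2 2 = s) (hanti : M 0 2 + M 1 1 + M 2 0 = s) :
    M = magicSquare (M 0 0 - M 1 1) (M 0 2 - M 1 1) (M 1 1) := by
  have r0 := hrow 0; have r1 := hrow 1; have r2 := hrow 2
  have c0 := hcol 0; have c1 := hcol 1; have c2 := hcol 2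
  simp only [Fin.sum_univ_three] at r0 r1 r2 c0 c1 c2
  ext i j
  fin_cases i <;> fin_cases j <;> simp [magicSquare, magicOffset] <;> omega

theorem isBoundedMagicSquare3_magicSquare_iff {t c : ℕ} :
    IsBoundedMagicSquare3 t (magicSquare a b c) ↔
      IsMagicPair a b ∧ a.natAbs + b.natAbs < c ∧ c + a.natAbs + b.natAbs < t := by
  rw [isMagicPair_iff_injective_magicOffset, ← forall_add_magicOffset_mem_Ioo_iff]
  simp only [IsBoundedMagicSquare3, magicSquare, Matrix.of_apply, Set.mem_Ioo]
  constructor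
  · rintro ⟨hbound, hinj, -⟩
    refine ⟨fun p q h => hinj (by simp only [h]), fun i j => ?_⟩
    have := hbound i j
    omega
  · rintro ⟨hinj, hbound⟩
    refine ⟨fun i j => ?_, fun p q h => hinj ?_, 3 * c, fun i => ?_, fun j => ?_, ?_, ?_⟩
    · have := hbound i j
      omega
    · have := hbound p.1 p.2; have := hbound q.1 q.2
      simp only at h ⊢
      omega
    · have h0 := hbound i 0; have h1 := hbound i 1; have h2 := hbound i 2
      fin_cases i <;> simp [Fin.sum_univ_three, magicOffset] at h0 h1 h2 ⊢ <;> omega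
    · have h0 := hbound 0 j; have h1 := hbound 1 j; have h2 := hbound 2 j
      fin_cases j <;> simp [Fin.sum_univ_three, magicOffset] at h0 h1 h2 ⊢ <;> omega
    · have h0 := hbound 0 0; have h2 := hbound 2 2
      simp only [magicOffset, Matrix.of_apply, Matrix.cons_val', Matrix.cons_val,
        Matrix.cons_val_zero, Matrix.cons_val_one, Matrix.cons_val_fin_one, Fin.isValue] at h0 h2 ⊢
      omega
    · have h0 := hbound 0 2; have h2 := hbound 2 0
      simp only [magicOffset, Matrix.of_apply, Matrix.cons_val', Matrix.cons_val,
        Matrix.cons_val_zero, Matrix.cons_val_one, Matrix.cons_val_fin_one, Fin.isValue] at h0 h2 ⊢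
      omega

end Parametrization

noncomputable def magicPairs (m : ℕ) : Finset (ℤ × ℤ) :=
  {p ∈ Icc (-(m : ℤ)) m ×ˢ Icc (-(m : ℤ)) m |
    IsMagicPair p.1 p.2 ∧ p.1.natAbs + p.2.natAbs = m}

theorem mem_magicPairs {m : ℕ} {p : ℤ × ℤ} :
    p ∈ magicPairs m ↔ IsMagicPair p.1 p.2 ∧ p.1.natAbs + p.2.natAbs = m := by
  simp only [magicPairs, mem_filter, mem_product, mem_Icc, and_iff_right_iff_imp]
  omega

noncomputable def magicParams (t : ℕ) : Finset ((ℤ × ℤ) × ℕ) :=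
  (range t).biUnion fun m => magicPairs m ×ˢ Ioo m (t - m)

theorem mem_magicParams {t : ℕ} {x : (ℤ × ℤ) × ℕ} :
    x ∈ magicParams t ↔ IsMagicPair x.1.1 x.1.2 ∧ x.1.1.natAbs + x.1.2.natAbs < x.2 ∧
      x.2 + x.1.1.natAbs + x.1.2.natAbs < t := by
  simp only [magicParams, mem_biUnion, mem_range, mem_product, mem_magicPairs, mem_Ioo]
  constructor
  · rintro ⟨m, -, ⟨hp, rfl⟩, hc⟩
    exact ⟨hp, by omega⟩
  · rintro ⟨hp, h⟩
    exact ⟨_, by omega, ⟨hp, rfl⟩, by omega⟩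

theorem card_magicParams (t : ℕ) :
    #(magicParams t) = ∑ m ∈ range t, #(magicPairs m) * (t - 1 - 2 * m) := by
  rw [magicParams, card_biUnion]
  · refine sum_congr rfl fun m _ => ?_
    rw [card_product, Nat.card_Ioo]
    congr 1
    omega
  · intro m _ m' _ hm
    refine disjoint_left.2 fun x hx hx' => hm ?_
    rw [mem_product, mem_magicPairs] at hx hx'
    omega

theorem c3_eq_card_magicParams (t : ℕ) : c3 t = #(magicParams t) := by
  let toSquare : (ℤ × ℤ) × ℕ → Matrix (Fin 3) (Fin 3) ℕ := fun x => magicSquare x.1.1 x.1.2 x.2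
  have himage : {M | IsBoundedMagicSquare3 t M} = toSquare '' magicParams t := by
    ext M
    simp only [Set.mem_ofPred_eq, Set.mem_image, mem_coe, mem_magicParams]
    constructor
    · intro h
      obtain ⟨-, -, s, hrow, hcol, hdiag, hanti⟩ := id h
      have hM := eq_magicSquare_of_sums hrow hcol hdiag hanti
      refine ⟨((M 0 0 - M 1 1, M 0 2 - M 1 1), M 1 1), ?_, hM.symm⟩
      rw [hM] at h
      exact isBoundedMagicSquare3_magicSquare_iff.1 h
    · rintro ⟨x, hx, rfl⟩
      exact isBoundedMagicSquare3_magicSquare_iff.2 hx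
  have hinj : Set.InjOn toSquare (magicParams t) := by
    rintro ⟨⟨a, b⟩, c⟩ hx ⟨⟨a', b'⟩, c'⟩ hx' h
    rw [mem_coe, mem_magicParams] at hx hx'
    dsimp only at hx hx'
    have h00 := congrFun (congrFun h 0) 0
    have h02 := congrFun (congrFun h 0) 2
    have h11 := congrFun (congrFun h 1) 1
    simp only [toSquare, magicSquare, magicOffset, Matrix.of_apply, Matrix.cons_val',
      Matrix.cons_val, Matrix.cons_val_zero, Matrix.cons_val_one, Matrix.cons_val_fin_one,
      Fin.isValue] at h00 h02 h11
    simp only [Prod.mk.injEq]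
    omega
  rw [c3, himage, hinj.ncard_image, Set.ncard_coe_finset]

def magicSplits (m : ℕ) : Finset ℕ :=
  {u ∈ Ioo 0 m | IsMagicPair u (m - u)}

theorem magicPairs_eq_image (m : ℕ) :
    magicPairs m = (((({1, -1} : Finset ℤ) ×ˢ ({1, -1} : Finset ℤ)) ×ˢ magicSplits m).image
      fun x : (ℤ × ℤ) × ℕ => (x.1.1 * x.2, x.1.2 * (m - x.2 : ℤ))) := by
  have sign : ∀ a : ℤ, a ≠ 0 → ∃ s ∈ ({1, -1} : Finset ℤ), a = s * a.natAbs := fun a ha => by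
    rcases ha.lt_or_gt with h | h
    · exact ⟨-1, by simp, by omega⟩
    · exact ⟨1, by simp, by omega⟩
  ext ⟨a, b⟩
  simp only [mem_magicPairs, mem_image, mem_product, magicSplits, mem_filter, mem_Ioo,
    Prod.exists, Prod.mk.injEq]
  constructor
  · rintro ⟨hab, hm⟩
    obtain ⟨s, hs, ha⟩ := sign a hab.1
    obtain ⟨s', hs', hb⟩ := sign b hab.2.1
    refine ⟨s, s', a.natAbs, ⟨⟨hs, hs'⟩, ?_⟩, ha.symm, ?_⟩
    · obtain ⟨h1, h2, h3, h4, h5⟩ := hab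
      exact ⟨⟨by omega, by omega⟩, by omega, by omega, by omega, by omega, by omega⟩
    · rw [hb]
      congr 1
      omega
  · rintro ⟨s, s', u, ⟨⟨hs, hs'⟩, ⟨hu0, hum⟩, h1, h2, h3, h4, h5⟩, rfl, rfl⟩
    simp only [mem_insert, mem_singleton] at hs hs'
    rcases hs with rfl | rfl <;> rcases hs' with rfl | rfl <;>
      exact ⟨⟨by omega, by omega, by omega, by omega, by omega⟩, by omega⟩

theorem card_magicPairs (m : ℕ) : #(magicPairs m) = 4 * #(magicSplits m) := by
  rw [magicPairs_eq_image, card_image_of_injOn, card_product, card_product]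
  · rfl
  rintro ⟨⟨s, s'⟩, u⟩ hx ⟨⟨r, r'⟩, v⟩ hy h
  simp only [coe_product, Set.mem_prod, mem_coe, mem_insert, mem_singleton, magicSplits,
    mem_filter, mem_Ioo, Prod.mk.injEq] at hx hy h ⊢
  obtain ⟨⟨rfl | rfl, rfl | rfl⟩, hu, -⟩ := hx <;>
    obtain ⟨⟨rfl | rfl, rfl | rfl⟩, hv, -⟩ := hy <;> omega

theorem card_filter_Ioo_mul_eq {k : ℕ} (hk : 0 < k) (n m : ℕ) :
    #{u ∈ Ioo 0 m | k * u = n} = if k ∣ n ∧ 0 < n ∧ n < k * m then 1 else 0 := by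
  split_ifs with h
  · obtain ⟨⟨d, rfl⟩, hpos, hlt⟩ := h
    rw [card_eq_one]
    refine ⟨d, ext fun u => ?_⟩
    simp only [mem_filter, mem_Ioo, mem_singleton]
    constructor
    · rintro ⟨-, hu⟩
      exact Nat.eq_of_mul_eq_mul_left hk hu
    · rintro rfl
      exact ⟨⟨Nat.pos_of_mul_pos_left hpos, Nat.lt_of_mul_lt_mul_left hlt⟩, rfl⟩
  · rw [card_eq_zero, filter_eq_empty_iff]
    rintro u hu rfl
    rw [mem_Ioo] at hu
    exact h ⟨dvd_mul_right k u, Nat.mul_pos hk hu.1, Nat.mul_lt_mul_of_pos_left hu.2 hk⟩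

theorem card_magicSplits (m : ℕ) :
    #(magicSplits m) = m - 1 - (if 2 ∣ m then 1 else 0) - (if 3 ∣ m then 2 else 0) := by
  have hsum : #(magicSplits m) + #{u ∈ Ioo 0 m | 2 * u = m} + #{u ∈ Ioo 0 m | 3 * u = m} +
      #{u ∈ Ioo 0 m | 3 * u = 2 * m} = m - 1 := by
    simp only [magicSplits, card_filter, ← sum_add_distrib]
    rw [show m - 1 = #(Ioo 0 m) by simp, card_eq_sum_ones]
    refine sum_congr rfl fun u hu => ?_
    rw [mem_Ioo] at hu
    split_ifs <;> simp only [IsMagicPair] at * <;> omega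
  rw [card_filter_Ioo_mul_eq (by norm_num), card_filter_Ioo_mul_eq (by norm_num),
    card_filter_Ioo_mul_eq (by norm_num)] at hsum
  split_ifs at hsum ⊢ <;> omega

theorem card_magicSplits_recurrence (i : ℕ) :
    #(magicSplits (i + 6)) + #(magicSplits (i + 1)) =
      #(magicSplits (i + 4)) + #(magicSplits (i + 3)) := by
  simp only [card_magicSplits]
  split_ifs <;> omega

section SecondDifference

variable {R : Type*} [CommRing R] (f : ℕ → R)

theorem sum_range_ite_two_mul_eq (k : ℕ) :
    ∑ m ∈ range (k + 2), (if k = 2 * m then f m else 0) = if 2 ∣ k then f (k / 2) else 0 := by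
  split_ifs with hk
  · obtain ⟨j, rfl⟩ := hk
    simp_rw [Nat.mul_left_cancel_iff two_pos]
    rw [sum_ite_eq, if_pos (mem_range.2 (by omega)), Nat.mul_div_cancel_left j two_pos]
  · exact sum_eq_zero fun m _ => if_neg fun h => hk ⟨m, h⟩

theorem sum_range_mul_tsub_second_difference (k : ℕ) :
    ∑ m ∈ range (k + 2), f m * ((k + 2 - 1 - 2 * m : ℕ) : R) +
        ∑ m ∈ range k, f m * ((k - 1 - 2 * m : ℕ) : R) =
      2 * ∑ m ∈ range (k + 1), f m * ((k + 1 - 1 - 2 * m : ℕ) : R) +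
        if 2 ∣ k then f (k / 2) else 0 := by
  have extend : ∀ t ≤ k + 2, ∑ m ∈ range t, f m * ((t - 1 - 2 * m : ℕ) : R) =
      ∑ m ∈ range (k + 2), f m * ((t - 1 - 2 * m : ℕ) : R) := fun t ht =>
    sum_subset (range_subset_range.2 ht) fun m _ hm => by
      rw [mem_range] at hm
      rw [show t - 1 - 2 * m = 0 by omega, Nat.cast_zero, mul_zero]
  rw [extend k (by omega), extend (k + 1) (by omega), ← sum_range_ite_two_mul_eq,
    ← sum_add_distrib, mul_sum, ← sum_add_distrib]
  refine sum_congr rfl fun m _ => ?_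
  split_ifs with h
  · rw [show k + 2 - 1 - 2 * m = 1 by omega, show k - 1 - 2 * m = 0 by omega,
      show k + 1 - 1 - 2 * m = 0 by omega]
    simp
  · have : k + 2 - 1 - 2 * m + (k - 1 - 2 * m) = 2 * (k + 1 - 1 - 2 * m) := by omega
    rw [← mul_add, ← Nat.cast_add, this]
    push_cast
    ring

theorem mk_sum_range_mul_tsub_mul_one_sub_X_sq :
    mk (fun t => ∑ m ∈ range t, f m * ((t - 1 - 2 * m : ℕ) : R)) * (1 - X) ^ 2 =
      X ^ 2 * expand 2 two_ne_zero (mk f) := by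
  ext n
  rw [show ∀ φ : R⟦X⟧, φ * (1 - X) ^ 2 = φ + X ^ 2 * φ - (X * φ + X * φ) from fun φ => by ring]
  rcases n with _ | _ | k
  · simp
  · simp [coeff_X_pow_mul']
  · simp only [map_add, map_sub, coeff_X_pow_mul', coeff_succ_X_mul, coeff_mk, coeff_expand]
    rw [show k + 1 + 1 = k + 2 from rfl, if_pos (by omega), if_pos (by omega),
      Nat.add_sub_cancel]
    linear_combination sum_range_mul_tsub_second_difference f k

end SecondDifference

theorem one_sub_X_sq_mul_one_sub_X_cube_mul_mk_card_magicPairs :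
    (1 - X ^ 2) * (1 - X ^ 3) * PowerSeries.mk (fun m => (#(magicPairs m) : ℚ)) =
      8 * X ^ 4 + 16 * X ^ 5 := by
  ext n
  rw [show ∀ φ : ℚ⟦X⟧, (1 - X ^ 2) * (1 - X ^ 3) * φ = φ + X ^ 5 * φ - (X ^ 2 * φ + X ^ 3 * φ)
    from fun φ => by ring]
  rw [← map_ofNat C 8, ← map_ofNat C 16]
  simp only [map_add, map_sub, coeff_X_pow_mul', coeff_mk, coeff_C_mul, coeff_X_pow,
    card_magicPairs]
  rcases lt_or_ge n 6 with hn | hn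
  · interval_cases n <;> simp [card_magicSplits]
  · obtain ⟨i, rfl⟩ := Nat.exists_eq_add_of_le' hn
    have h := congrArg (Nat.cast : ℕ → ℚ) (card_magicSplits_recurrence i)
    push_cast at h
    simp only [show i + 6 - 5 = i + 1 by omega, show i + 6 - 2 = i + 4 by omega,
      show i + 6 - 3 = i + 3 by omega, if_pos (show 5 ≤ i + 6 by omega),
      if_pos (show 2 ≤ i + 6 by omega), if_pos (show 3 ≤ i + 6 by omega),
      if_neg (show i + 6 ≠ 4 by omega), if_neg (show i + 6 ≠ 5 by omega)]
    push_cast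
    linear_combination 4 * h

open PowerSeries in
theorem c3_generating_function :
    (1 - (PowerSeries.X : PowerSeries ℚ)) ^ 2 * (1 - PowerSeries.X ^ 4) *
        (1 - PowerSeries.X ^ 6) * PowerSeries.mk (fun t => (c3 t : ℚ)) =
      8 * PowerSeries.X ^ 10 * (2 * PowerSeries.X ^ 2 + 1) := by
  let pairCounts : ℕ → ℚ := fun m => #(magicPairs m)
  have hc3 : PowerSeries.mk (fun t => (c3 t : ℚ)) =
      PowerSeries.mk fun t => ∑ m ∈ range t, pairCounts m * ((t - 1 - 2 * m : ℕ) : ℚ) := by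
    ext t
    simp [c3_eq_card_magicParams, card_magicParams, pairCounts]
  have hexpand : ∀ k, expand 2 two_ne_zero (1 - X ^ k : ℚ⟦X⟧) = 1 - X ^ (2 * k) := fun k => by
    simp [pow_mul]
  calc _ = (1 - X ^ 4) * (1 - X ^ 6) *
        (PowerSeries.mk (fun t => ∑ m ∈ range t, pairCounts m * ((t - 1 - 2 * m : ℕ) : ℚ)) *
          (1 - X) ^ 2) := by rw [hc3]; ring
    _ = X ^ 2 * expand 2 two_ne_zero ((1 - X ^ 2) * (1 - X ^ 3) * PowerSeries.mk pairCounts) := by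
      rw [mk_sum_range_mul_tsub_mul_one_sub_X_sq, map_mul, map_mul, hexpand, hexpand]
      ring
    _ = _ := by
      rw [one_sub_X_sq_mul_one_sub_X_cube_mul_mk_card_magicPairs]
      simp only [map_add, map_mul, map_ofNat, map_pow, expand_X]
      ring
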